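/- arXiv:1706.09752 — 5 statements merged into one kernel-verified Lean document; each statement's English description precedes it below -/
import Mathlib

section
/- For all H₁, H₂ ∈ [0, log 2], the function g(H₁,H₂) := h₂(h₂⁻¹(H₁) ∗ h₂⁻¹(H₂)) satisfies g(H₁,H₂) ≤ log 2 − (log 2 − H₁)(log 2 − H₂)/log 2. -/
noncomputable def binConv (a b : ℝ) : ℝ := a * (1 - b) + (1 - a) * b

noncomputable def h2 (p : ℝ) : ℝ := -p * Real.log p - (1 - p) * Real.log (1 - p)

/-!
Put `p = (1 - x) / 2`. On `[-1, 1]` the gap `log 2 - h₂ p` is the power series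
`F x = ∑ c k * (x ^ 2) ^ (k + 1)` with `c k = 1 / ((2k + 1)(2k + 2)) ≥ 0`,
and `F 1 = ∑ c k = log 2`.
Since `(1 - x y) / 2 = p ∗ q` for `q = (1 - y) / 2`, the claim is `F x * F y ≤ F 1 * F (x y)`,
which is Chebyshev's sum inequality for the weights `c k` and the two similarly ordered sequences
`(x ^ 2) ^ (k + 1)` and `(y ^ 2) ^ (k + 1)`.
-/

open Real Finset

theorem Monovary.sum_mul_sum_le_sum_mul_sum {ι : Type*} {w f g : ι → ℝ} (hfg : Monovary f g)
    (s : Finset ι) (hw : ∀ i, 0 ≤ w i) :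
    (∑ i ∈ s, w i * f i) * (∑ i ∈ s, w i * g i) ≤
      (∑ i ∈ s, w i) * ∑ i ∈ s, w i * (f i * g i) := by
  have hpairs : 0 ≤ ∑ i ∈ s, ∑ j ∈ s, w i * w j * ((f j - f i) * (g j - g i)) :=
    sum_nonneg fun i _ => sum_nonneg fun j _ =>
      mul_nonneg (mul_nonneg (hw i) (hw j)) (hfg.sub_mul_sub_nonneg i j)
  have hexpand : ∑ i ∈ s, ∑ j ∈ s, w i * w j * ((f j - f i) * (g j - g i)) =
      2 * ((∑ i ∈ s, w i) * ∑ i ∈ s, w i * (f i * g i)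
        - (∑ i ∈ s, w i * f i) * (∑ i ∈ s, w i * g i)) := by
    have hterm : ∀ i j, w i * w j * ((f j - f i) * (g j - g i)) =
        w i * (w j * (f j * g j)) + w i * (f i * g i) * w j
          - w i * f i * (w j * g j) - w i * g i * (w j * f j) := fun i j => by ring
    rw [sum_congr rfl fun i _ => sum_congr rfl fun j _ => hterm i j]
    simp only [sum_add_distrib, sum_sub_distrib, ← sum_mul_sum]
    ring
  linarith

theorem Monovary.mul_le_mul_of_hasSum {ι : Type*} {w f g : ι → ℝ} {W A B C : ℝ}
    (hfg : Monovary f g) (hw : ∀ i, 0 ≤ w i) (hW : HasSum w W)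
    (hA : HasSum (fun i => w i * f i) A) (hB : HasSum (fun i => w i * g i) B)
    (hprod : HasSum (fun i => w i * (f i * g i)) C) : A * B ≤ W * C :=
  le_of_tendsto_of_tendsto' (Filter.Tendsto.mul hA hB) (Filter.Tendsto.mul hW hprod)
    fun s => hfg.sum_mul_sum_le_sum_mul_sum s hw

noncomputable def h2TaylorCoeff (k : ℕ) : ℝ := 1 / ((2 * k + 1) * (2 * k + 2))

lemma h2TaylorCoeff_nonneg (k : ℕ) : 0 ≤ h2TaylorCoeff k := by
  unfold h2TaylorCoeff
  positivity

lemma summable_h2TaylorCoeff : Summable h2TaylorCoeff := by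
  have hsq : Summable fun k : ℕ => 1 / ((k : ℝ) + 1) ^ 2 := by
    simpa using (summable_nat_add_iff 1).2 (summable_one_div_nat_pow.2 one_lt_two)
  refine hsq.of_nonneg_of_le h2TaylorCoeff_nonneg fun k => ?_
  unfold h2TaylorCoeff
  gcongr
  nlinarith

lemma norm_h2TaylorCoeff_mul_pow_le {x : ℝ} (hx : |x| ≤ 1) (k : ℕ) :
    ‖h2TaylorCoeff k * (x ^ 2) ^ (k + 1)‖ ≤ h2TaylorCoeff k := by
  rw [norm_mul, Real.norm_of_nonneg (h2TaylorCoeff_nonneg k), norm_pow, norm_pow, Real.norm_eq_abs]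
  exact mul_le_of_le_one_right (h2TaylorCoeff_nonneg k)
    (pow_le_one₀ (by positivity) (pow_le_one₀ (abs_nonneg x) hx))

lemma h2_eq_binEntropy : h2 = binEntropy := by
  ext p
  simp only [h2, binEntropy, Real.log_inv]
  ring

lemma hasSum_h2TaylorCoeff_mul_pow_of_abs_lt_one {x : ℝ} (hx : |x| < 1) :
    HasSum (fun k => h2TaylorCoeff k * (x ^ 2) ^ (k + 1)) (log 2 - h2 ((1 - x) / 2)) := by
  have hx2 : |x ^ 2| < 1 := by
    rw [abs_pow]
    exact pow_lt_one₀ (abs_nonneg x) hx two_ne_zero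
  have hseries := ((hasSum_log_sub_log_of_abs_lt_one hx).mul_left (x / 2)).sub
    ((hasSum_pow_div_log_of_abs_lt_one hx2).mul_left (1 / 2))
  obtain ⟨hneg, hpos⟩ : 0 < 1 - x ∧ 0 < 1 + x := by
    constructor <;> linarith [abs_lt.1 hx]
  have hval : x / 2 * (log (1 + x) - log (1 - x)) - 1 / 2 * -log (1 - x ^ 2) =
      log 2 - h2 ((1 - x) / 2) := by
    unfold h2
    rw [show 1 - x ^ 2 = (1 - x) * (1 + x) by ring, log_mul hneg.ne' hpos.ne',
      show 1 - (1 - x) / 2 = (1 + x) / 2 by ring, log_div hneg.ne' two_ne_zero,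
      log_div hpos.ne' two_ne_zero]
    ring
  rw [hval] at hseries
  refine (funext fun k => ?_ : _ = fun k => h2TaylorCoeff k * (x ^ 2) ^ (k + 1)) ▸ hseries
  rw [← pow_mul, show 2 * (k + 1) = 2 * k + 1 + 1 by ring, pow_succ]
  unfold h2TaylorCoeff
  field_simp
  ring

lemma hasSum_h2TaylorCoeff_mul_pow {x : ℝ} (hx : |x| ≤ 1) :
    HasSum (fun k => h2TaylorCoeff k * (x ^ 2) ^ (k + 1)) (log 2 - h2 ((1 - x) / 2)) := by
  have hsummable : Summable fun k => h2TaylorCoeff k * (x ^ 2) ^ (k + 1) :=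
    summable_h2TaylorCoeff.of_norm_bounded (norm_h2TaylorCoeff_mul_pow_le hx)
  -- both sides are continuous on `[-1, 1]` and agree on its interior
  have heq : Set.EqOn (fun x => ∑' k, h2TaylorCoeff k * (x ^ 2) ^ (k + 1))
      (fun x => log 2 - h2 ((1 - x) / 2)) (Set.Icc (-1) 1) := by
    refine Set.EqOn.of_subset_closure (s := Set.Ioo (-1) 1)
      (fun x hx => (hasSum_h2TaylorCoeff_mul_pow_of_abs_lt_one (abs_lt.2 hx)).tsum_eq)
      ?_ ?_ Set.Ioo_subset_Icc_self (closure_Ioo (by norm_num)).ge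
    · exact continuousOn_tsum (fun k => by fun_prop) summable_h2TaylorCoeff
        fun k x hx => norm_h2TaylorCoeff_mul_pow_le (abs_le.2 hx) k
    · rw [h2_eq_binEntropy]
      fun_prop
  have hx_eq : ∑' k, h2TaylorCoeff k * (x ^ 2) ^ (k + 1) = log 2 - h2 ((1 - x) / 2) :=
    heq (abs_le.1 hx)
  exact hx_eq ▸ hsummable.hasSum

lemma hasSum_h2TaylorCoeff : HasSum h2TaylorCoeff (log 2) := by
  simpa [h2_eq_binEntropy] using hasSum_h2TaylorCoeff_mul_pow (x := 1) (by norm_num)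

lemma log_two_sub_h2_mul_le {a b : ℝ} (ha : a ∈ Set.Icc 0 1) (hb : b ∈ Set.Icc 0 1) :
    (log 2 - h2 a) * (log 2 - h2 b) ≤ log 2 * (log 2 - h2 (binConv a b)) := by
  have hx : |1 - 2 * a| ≤ 1 := abs_le.2 ⟨by linarith [ha.2], by linarith [ha.1]⟩
  have hy : |1 - 2 * b| ≤ 1 := abs_le.2 ⟨by linarith [hb.2], by linarith [hb.1]⟩
  have hxy : |(1 - 2 * a) * (1 - 2 * b)| ≤ 1 := by
    rw [abs_mul]
    exact mul_le_one₀ hx (abs_nonneg _) hy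
  have hprod := hasSum_h2TaylorCoeff_mul_pow hxy
  have hmono (z : ℝ) (hz : |z| ≤ 1) : Antitone fun k : ℕ => (z ^ 2) ^ (k + 1) :=
    fun m n hmn => pow_le_pow_of_le_one (sq_nonneg z) (sq_le_one_iff_abs_le_one z |>.2 hz)
      (by omega)
  simp only [mul_pow (1 - 2 * a), mul_pow ((1 - 2 * a) ^ 2)] at hprod
  have key := ((hmono _ hx).monovary (hmono _ hy)).mul_le_mul_of_hasSum h2TaylorCoeff_nonneg
    hasSum_h2TaylorCoeff (hasSum_h2TaylorCoeff_mul_pow hx) (hasSum_h2TaylorCoeff_mul_pow hy) hprod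
  rwa [show (1 - (1 - 2 * a)) / 2 = a by ring, show (1 - (1 - 2 * b)) / 2 = b by ring,
    show (1 - (1 - 2 * a) * (1 - 2 * b)) / 2 = binConv a b by unfold binConv; ring] at key

/-- For all `H₁, H₂ ∈ [0, log 2]`,
`h₂(h₂⁻¹(H₁) ∗ h₂⁻¹(H₂)) ≤ log 2 − (log 2 − H₁)(log 2 − H₂)/log 2`. -/
theorem h2_binConv_upper_bound (h2inv : ℝ → ℝ)
    (hinv : ∀ x ∈ Set.Icc (0:ℝ) (Real.log 2),
      h2inv x ∈ Set.Icc (0:ℝ) (1/2) ∧ h2 (h2inv x) = x)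
    (H₁ H₂ : ℝ) (hH₁ : H₁ ∈ Set.Icc (0:ℝ) (Real.log 2))
    (hH₂ : H₂ ∈ Set.Icc (0:ℝ) (Real.log 2)) :
    h2 (binConv (h2inv H₁) (h2inv H₂)) ≤
      Real.log 2 - (Real.log 2 - H₁) * (Real.log 2 - H₂) / Real.log 2 := by
  obtain ⟨ha, hH₁_eq⟩ := hinv H₁ hH₁
  obtain ⟨hb, hH₂_eq⟩ := hinv H₂ hH₂
  have key := log_two_sub_h2_mul_le (Set.Icc_subset_Icc_right (by norm_num) ha)
    (Set.Icc_subset_Icc_right (by norm_num) hb)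
  rw [hH₁_eq, hH₂_eq] at key
  have hdiv : (log 2 - H₁) * (log 2 - H₂) / log 2 ≤
      log 2 - h2 (binConv (h2inv H₁) (h2inv H₂)) :=
    (div_le_iff₀' (log_pos one_lt_two)).2 key
  linarith
end

section
/- Fidelity lower bound for channel entropy: Let σ₀, σ₁ be density matrices on ℂ^d, f := F(σ₀,σ₁), and H := log 2 − H((σ₀+σ₁)/2) + (H(σ₀)+H(σ₁))/2. Then e^H − 1 ≤ f. In particular H ≤ log(1+f). -/
open Matrix Classical
open scoped Kronecker ComplexOrder

/-- von Neumann entropy `H(ρ) = -tr ρ log ρ`, via eigenvalues (natural log). -/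
noncomputable def vN {n : Type*} [Fintype n] [DecidableEq n] (ρ : Matrix n n ℂ) : ℝ :=
  if h : ρ.IsHermitian then -∑ i, h.eigenvalues i * Real.log (h.eigenvalues i) else 0

/-- positive semidefinite square root (0 if not PSD). -/
noncomputable def msqrt {n : Type*} [Fintype n] [DecidableEq n] (A : Matrix n n ℂ) :
    Matrix n n ℂ :=
  if h : A.PosSemidef then
    (h.1.eigenvectorUnitary : Matrix n n ℂ) *
      Matrix.diagonal (fun i => ((Real.sqrt (h.1.eigenvalues i) : ℝ) : ℂ)) *
      star (h.1.eigenvectorUnitary : Matrix n n ℂ)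
  else 0

/-- matrix logarithm of a Hermitian matrix via spectral decomposition. -/
noncomputable def mlog {n : Type*} [Fintype n] [DecidableEq n] (A : Matrix n n ℂ) :
    Matrix n n ℂ :=
  if h : A.IsHermitian then
    (h.eigenvectorUnitary : Matrix n n ℂ) *
      Matrix.diagonal (fun i => (Real.log (h.eigenvalues i) : ℂ)) *
      star (h.eigenvectorUnitary : Matrix n n ℂ)
  else 0

/-- quantum relative entropy `D(ρ‖σ) = tr ρ (log ρ - log σ)`. -/
noncomputable def relEnt {n : Type*} [Fintype n] [DecidableEq n] (ρ σ : Matrix n n ℂ) : ℝ :=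
  ((ρ * (mlog ρ - mlog σ)).trace).re

/-- trace norm `‖A‖₁ = tr √(A† A)`. -/
noncomputable def traceNorm {n : Type*} [Fintype n] [DecidableEq n] (A : Matrix n n ℂ) : ℝ :=
  ((msqrt (Aᴴ * A)).trace).re

/-- (root) fidelity `F(ρ,σ) = ‖√ρ √σ‖₁`. -/
noncomputable def Fid {n : Type*} [Fintype n] [DecidableEq n] (ρ σ : Matrix n n ℂ) : ℝ :=
  traceNorm (msqrt ρ * msqrt σ)

/-- density matrix predicate. -/
def IsDensity {n : Type*} [Fintype n] [DecidableEq n] (ρ : Matrix n n ℂ) : Prop :=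
  ρ.PosSemidef ∧ ρ.trace = 1

/-!
With `ρ = (σ₀ + σ₁)/2` one has `H = log 2 - (D(σ₀‖ρ) + D(σ₁‖ρ))/2`. Diagonalise `σ = ∑ λᵢ uᵢuᵢ*`
and `ρ = ∑ μⱼ vⱼvⱼ*`; on the Nussbaum–Szkoła distributions `p(i,j) = λᵢ|⟨uᵢ,vⱼ⟩|²` and
`q(i,j) = μⱼ|⟨uᵢ,vⱼ⟩|²` the divergence `D(σ‖ρ)` is `KL(p‖q)` and `tr √σ√ρ = ∑ √(pq)`, so weighted
AM–GM gives `exp(-D(σ‖ρ)/2) ≤ tr √σ√ρ`; the support condition holds because `σₖ ≤ 2ρ`.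
Hence `e^H ≤ 2 g₀ g₁` with `gₖ = tr √σₖ√ρ`. Cauchy–Schwarz for the Hilbert–Schmidt product of
`√σ₀ + √σ₁` and `√ρ` gives `(g₀ + g₁)² ≤ 2 + 2 tr √σ₀√σ₁`, hence
`2 g₀ g₁ ≤ 1 + tr √σ₀√σ₁ ≤ 1 + F(σ₀,σ₁)`.
-/

open Real in
theorem exp_neg_half_sum_mul_log_sub_le_sum_sqrt_mul {ι : Type*} [Fintype ι] {p q : ι → ℝ}
    (hp : ∀ i, 0 ≤ p i) (hp_sum : ∑ i, p i = 1) (hpq : ∀ i, 0 < p i → 0 < q i) :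
    exp (-(∑ i, p i * (log (p i) - log (q i))) / 2) ≤ ∑ i, √(p i * q i) := by
  have hgeom (i : ι) : exp (-(p i * (log (p i) - log (q i))) / 2) = √(q i / p i) ^ p i := by
    rcases (hp i).eq_or_lt with h | h
    · simp [← h]
    · rw [rpow_def_of_pos (sqrt_pos.2 (div_pos (hpq i h) h)), log_sqrt (div_pos (hpq i h) h).le,
        log_div (hpq i h).ne' h.ne']
      ring_nf
  have harith (i : ι) : p i * √(q i / p i) = √(p i * q i) := by
    rcases (hp i).eq_or_lt with h | h
    · simp [← h]
    · rw [← sqrt_sq (hp i), ← sqrt_mul (sq_nonneg _), sqrt_sq (hp i)]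
      congr 1
      field_simp
  calc exp (-(∑ i, p i * (log (p i) - log (q i))) / 2)
      = ∏ i, √(q i / p i) ^ p i := by
        rw [← Finset.prod_congr rfl fun i _ => hgeom i, ← exp_sum, neg_div, Finset.sum_div,
          ← Finset.sum_neg_distrib]
        simp only [neg_div]
    _ ≤ ∑ i, p i * √(q i / p i) :=
        geom_mean_le_arith_mean_weighted _ _ _ (fun i _ => hp i) hp_sum fun i _ => sqrt_nonneg _
    _ = ∑ i, √(p i * q i) := Finset.sum_congr rfl fun i _ => harith i

section GramMatrix

variable {m n p : Type*} [Fintype m]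

theorem conjTranspose_mul_apply_eq_inner (B : Matrix m n ℂ) (C : Matrix m p ℂ) (i : n) (j : p) :
    (Bᴴ * C) i j = inner ℂ (WithLp.toLp 2 (fun k => B k i) : EuclideanSpace ℂ m)
      (WithLp.toLp 2 (fun k => C k j)) := by
  simp [mul_apply, EuclideanSpace.inner_eq_star_dotProduct, dotProduct, mul_comm]

theorem norm_conjTranspose_mul_apply_le (B : Matrix m n ℂ) (C : Matrix m p ℂ) (i : n) (j : p) :
    ‖(Bᴴ * C) i j‖ ≤ √((Bᴴ * B) i i).re * √((Cᴴ * C) j j).re := by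
  simp only [conjTranspose_mul_apply_eq_inner, ← RCLike.re_to_complex, inner_self_eq_norm_sq,
    Real.sqrt_sq (norm_nonneg _)]
  exact norm_inner_le_norm _ _

theorem sq_re_trace_conjTranspose_mul_le [Fintype n] (X Y : Matrix m n ℂ) :
    (Xᴴ * Y).trace.re ^ 2 ≤ (Xᴴ * X).trace.re * (Yᴴ * Y).trace.re := by
  have hswap : (Yᴴ * X).trace.re = (Xᴴ * Y).trace.re := by
    rw [← conjTranspose_conjTranspose X, ← conjTranspose_mul, trace_conjTranspose,
      conjTranspose_conjTranspose, Complex.star_def, Complex.conj_re]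
  have hquad (s : ℝ) : 0 ≤ (Yᴴ * Y).trace.re * (s * s) + (-2 * (Xᴴ * Y).trace.re) * s +
      (Xᴴ * X).trace.re := by
    have h := (Complex.nonneg_iff.mp
      (posSemidef_conjTranspose_mul_self (X - s • Y)).trace_nonneg).1
    simp only [conjTranspose_sub, conjTranspose_smul, star_trivial, Matrix.sub_mul, Matrix.mul_sub,
      Matrix.smul_mul, Matrix.mul_smul, trace_sub, trace_smul, Complex.sub_re, Complex.smul_re,
      smul_eq_mul, hswap] at h
    linarith
  have h := discrim_le_zero hquad
  rw [discrim] at h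
  nlinarith

end GramMatrix

namespace Matrix.IsHermitian

variable {n : Type*} [Fintype n] [DecidableEq n] {A B : Matrix n n ℂ}
  (hA : A.IsHermitian) (hB : B.IsHermitian)

/-- The transition probabilities `|⟨aᵢ, bⱼ⟩|²` between the eigenbases of `A` and `B`. -/
noncomputable def eigenOverlap (i j : n) : ℝ :=
  Complex.normSq ((star (hA.eigenvectorUnitary : Matrix n n ℂ) * hB.eigenvectorUnitary) i j)

theorem eigenOverlap_nonneg (i j : n) : 0 ≤ eigenOverlap hA hB i j :=
  Complex.normSq_nonneg _

theorem sum_eigenOverlap_right (i : n) : ∑ j, eigenOverlap hA hB i j = 1 := by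
  set W := star (hA.eigenvectorUnitary : Matrix n n ℂ) * hB.eigenvectorUnitary
  have hW : W * star W = 1 := by
    simp only [W, star_mul, star_star]
    rw [Matrix.mul_assoc, ← Matrix.mul_assoc (hB.eigenvectorUnitary : Matrix n n ℂ),
      Unitary.mul_star_self_of_mem (SetLike.coe_mem _), Matrix.one_mul,
      Unitary.star_mul_self_of_mem (SetLike.coe_mem _)]
  show ∑ j, Complex.normSq (W i j) = 1
  simpa [mul_apply, Complex.re_sum, star_apply, Complex.mul_conj] using
    congrArg Complex.re (congrFun (congrFun hW i) i)

theorem star_eigenvectorUnitary_mul_mul_apply_self (j : n) :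
    (star (hA.eigenvectorUnitary : Matrix n n ℂ) * A * hA.eigenvectorUnitary) j j =
      hA.eigenvalues j := by
  have h := hA.conjStarAlgAut_star_eigenvectorUnitary
  rw [Unitary.conjStarAlgAut_star_apply] at h
  simp [h]

theorem cfc_id : hA.cfc id = A := by
  conv_rhs => rw [hA.spectral_theorem]
  rfl

theorem isHermitian_cfc (f : ℝ → ℝ) : (hA.cfc f).IsHermitian := by
  rw [← hA.cfc_eq]
  exact cfc_predicate f A

theorem cfc_mul_cfc (f g : ℝ → ℝ) : hA.cfc f * hA.cfc g = hA.cfc (fun x => f x * g x) := by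
  simp only [IsHermitian.cfc, ← map_mul, diagonal_mul_diagonal]
  congr 2
  ext i
  simp

theorem trace_cfc (f : ℝ → ℝ) : (hA.cfc f).trace = ((∑ i, f (hA.eigenvalues i) : ℝ) : ℂ) := by
  rw [IsHermitian.cfc, Unitary.conjStarAlgAut_apply, trace_mul_cycle, Unitary.coe_star_mul_self,
    one_mul, trace_diagonal]
  simp

theorem diag_star_mul_cfc_mul (f : ℝ → ℝ) (V : Matrix n n ℂ) (j : n) :
    (star V * hA.cfc f * V) j j = ((∑ i, f (hA.eigenvalues i) *
      Complex.normSq ((star (hA.eigenvectorUnitary : Matrix n n ℂ) * V) i j) : ℝ) : ℂ) := by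
  set W := star (hA.eigenvectorUnitary : Matrix n n ℂ) * V
  have hconj : star V * hA.cfc f * V =
      star W * diagonal (RCLike.ofReal ∘ f ∘ hA.eigenvalues) * W := by
    simp [W, IsHermitian.cfc, star_mul, mul_assoc]
  rw [hconj, mul_apply, Complex.ofReal_sum]
  refine Finset.sum_congr rfl fun i _ => ?_
  rw [mul_diagonal, star_apply, Complex.ofReal_mul, Complex.normSq_eq_conj_mul_self]
  simp only [Function.comp_apply, RCLike.star_def, RCLike.ofReal_eq_complex_ofReal]
  ring

theorem trace_cfc_mul_cfc (f g : ℝ → ℝ) : (hA.cfc f * hB.cfc g).trace =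
    ((∑ i, ∑ j, f (hA.eigenvalues i) * g (hB.eigenvalues j) * eigenOverlap hA hB i j : ℝ) : ℂ) := by
  rw [Finset.sum_comm, show hB.cfc g = (hB.eigenvectorUnitary : Matrix n n ℂ) *
      diagonal (RCLike.ofReal ∘ g ∘ hB.eigenvalues) * star (hB.eigenvectorUnitary : Matrix n n ℂ)
      from rfl, ← mul_assoc, trace_mul_cycle, ← mul_assoc]
  simp only [trace, diag, mul_diagonal, diag_star_mul_cfc_mul, Complex.ofReal_sum, Finset.sum_mul]
  refine Finset.sum_congr rfl fun j _ => Finset.sum_congr rfl fun i _ => ?_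
  simp only [Function.comp_apply, RCLike.ofReal_eq_complex_ofReal, eigenOverlap]
  push_cast
  ring

end Matrix.IsHermitian

section QuantumEntropy

variable {n : Type*} [Fintype n] [DecidableEq n] {A B σ ρ : Matrix n n ℂ}

theorem msqrt_eq_cfc (hA : A.PosSemidef) : msqrt A = hA.1.cfc Real.sqrt := by
  rw [msqrt, dif_pos hA, IsHermitian.cfc, Unitary.conjStarAlgAut_apply]
  rfl

theorem mlog_eq_cfc (hA : A.IsHermitian) : mlog A = hA.cfc Real.log := by
  rw [mlog, dif_pos hA, IsHermitian.cfc, Unitary.conjStarAlgAut_apply]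
  rfl

theorem vN_eq_neg_sum (hA : A.IsHermitian) :
    vN A = -∑ i, hA.eigenvalues i * Real.log (hA.eigenvalues i) :=
  dif_pos hA

theorem isHermitian_msqrt (hA : A.PosSemidef) : (msqrt A).IsHermitian :=
  msqrt_eq_cfc hA ▸ hA.1.isHermitian_cfc _

theorem msqrt_mul_self (hA : A.PosSemidef) : msqrt A * msqrt A = A := by
  rw [msqrt_eq_cfc hA, hA.1.cfc_mul_cfc]
  conv_rhs => rw [← hA.1.cfc_id]
  simp only [IsHermitian.cfc]
  congr 3
  ext i
  exact Real.mul_self_sqrt (hA.eigenvalues_nonneg i)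

theorem re_trace_le_traceNorm (X : Matrix n n ℂ) : X.trace.re ≤ traceNorm X := by
  have hP := posSemidef_conjTranspose_mul_self X
  set V := (hP.1.eigenvectorUnitary : Matrix n n ℂ)
  have hnorm : traceNorm X = ∑ j, √(hP.1.eigenvalues j) := by
    rw [traceNorm, msqrt_eq_cfc hP, hP.1.trace_cfc, Complex.ofReal_re]
  have htr : X.trace = (Vᴴ * (X * V)).trace := by
    rw [trace_mul_comm, mul_assoc, ← star_eq_conjTranspose,
      Unitary.mul_star_self_of_mem (SetLike.coe_mem _), mul_one]
  have hcol (j : n) : ((X * V)ᴴ * (X * V)) j j = hP.1.eigenvalues j := by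
    rw [← hP.1.star_eigenvectorUnitary_mul_mul_apply_self, conjTranspose_mul,
      star_eq_conjTranspose]
    simp only [V, mul_assoc]
  have hunit (j : n) : (Vᴴ * V) j j = 1 := by
    rw [← star_eq_conjTranspose, Unitary.star_mul_self_of_mem (SetLike.coe_mem _), one_apply_eq]
  rw [hnorm, htr, trace, Complex.re_sum]
  gcongr with j
  calc ((Vᴴ * (X * V)) j j).re ≤ ‖(Vᴴ * (X * V)) j j‖ := Complex.re_le_norm _
    _ ≤ √((Vᴴ * V) j j).re * √(((X * V)ᴴ * (X * V)) j j).re :=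
        norm_conjTranspose_mul_apply_le _ _ _ _
    _ = √(hP.1.eigenvalues j) := by rw [hunit, hcol]; simp

theorem re_trace_mul_mlog_self (hA : A.IsHermitian) : (A * mlog A).trace.re = -vN A := by
  have h : A * mlog A = hA.cfc (fun x => x * Real.log x) := by
    rw [mlog_eq_cfc hA]
    have h := hA.cfc_mul_cfc id Real.log
    rwa [hA.cfc_id] at h
  rw [h, hA.trace_cfc, vN_eq_neg_sum hA, neg_neg, Complex.ofReal_re]

theorem relEnt_eq_neg_vN_sub (hA : A.IsHermitian) (B : Matrix n n ℂ) :
    relEnt A B = -vN A - (A * mlog B).trace.re := by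
  rw [relEnt, mul_sub, trace_sub, Complex.sub_re, re_trace_mul_mlog_self hA]

theorem vN_midpoint_eq (hA : A.IsHermitian) (hB : B.IsHermitian) :
    vN (((1 : ℂ) / 2) • (A + B)) = (vN A + vN B) / 2 +
      (relEnt A (((1 : ℂ) / 2) • (A + B)) + relEnt B (((1 : ℂ) / 2) • (A + B))) / 2 := by
  set M := ((1 : ℂ) / 2) • (A + B)
  have hM : M.IsHermitian := (hA.add hB).smul (by simp [IsSelfAdjoint])
  have hsplit :
      (M * mlog M).trace.re = ((A * mlog M).trace.re + (B * mlog M).trace.re) / 2 := by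
    simp only [M, smul_mul, add_mul, trace_smul, trace_add, smul_eq_mul, Complex.mul_re]
    norm_num
    ring
  rw [relEnt_eq_neg_vN_sub hA, relEnt_eq_neg_vN_sub hB, ← neg_neg (vN M),
    ← re_trace_mul_mlog_self hM, hsplit]
  ring

theorem relEnt_eq_sum (hσ : σ.IsHermitian) (hρ : ρ.IsHermitian) :
    relEnt σ ρ = ∑ i, ∑ j, hσ.eigenvalues i * hσ.eigenOverlap hρ i j *
      (Real.log (hσ.eigenvalues i) - Real.log (hρ.eigenvalues j)) := by
  have hcross := hσ.trace_cfc_mul_cfc hρ id Real.log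
  rw [hσ.cfc_id, ← mlog_eq_cfc hρ] at hcross
  rw [relEnt_eq_neg_vN_sub hσ, vN_eq_neg_sum hσ, hcross, neg_neg, Complex.ofReal_re]
  simp only [mul_sub, Finset.sum_sub_distrib, id]
  congr 1
  · refine Finset.sum_congr rfl fun i _ => ?_
    rw [← Finset.sum_mul, ← Finset.mul_sum, hσ.sum_eigenOverlap_right hρ, mul_one]
  · exact Finset.sum_congr rfl fun i _ => Finset.sum_congr rfl fun j _ => mul_right_comm _ _ _

theorem re_trace_msqrt_mul_msqrt_eq_sum (hσ : σ.PosSemidef) (hρ : ρ.PosSemidef) :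
    (msqrt σ * msqrt ρ).trace.re = ∑ i, ∑ j,
      √(hσ.1.eigenvalues i) * √(hρ.1.eigenvalues j) * hσ.1.eigenOverlap hρ.1 i j := by
  rw [msqrt_eq_cfc hσ, msqrt_eq_cfc hρ, hσ.1.trace_cfc_mul_cfc hρ.1, Complex.ofReal_re]

open scoped MatrixOrder

theorem eigenvalue_mul_eigenOverlap_le (hσ : σ.PosSemidef) (hρ : ρ.IsHermitian) {t : ℝ}
    (hσρ : σ ≤ t • ρ) (i j : n) :
    hσ.1.eigenvalues i * hσ.1.eigenOverlap hρ i j ≤ t * hρ.eigenvalues j := by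
  set V := (hρ.eigenvectorUnitary : Matrix n n ℂ)
  have hσV : (star V * σ * V) j j =
      ((∑ k, hσ.1.eigenvalues k * hσ.1.eigenOverlap hρ k j : ℝ) : ℂ) := by
    have h := hσ.1.diag_star_mul_cfc_mul id V j
    rwa [hσ.1.cfc_id] at h
  have hdiag := ((Matrix.le_iff.mp hσρ).conjTranspose_mul_mul_same V).diag_nonneg (i := j)
  rw [← star_eq_conjTranspose, mul_sub, sub_mul, Matrix.sub_apply, mul_smul_comm, smul_mul_assoc,
    Matrix.smul_apply, hρ.star_eigenvectorUnitary_mul_mul_apply_self, hσV,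
    Complex.nonneg_iff] at hdiag
  simp only [Complex.sub_re, Complex.real_smul, Complex.mul_re, Complex.ofReal_re,
    Complex.ofReal_im] at hdiag
  calc hσ.1.eigenvalues i * hσ.1.eigenOverlap hρ i j
      ≤ ∑ k, hσ.1.eigenvalues k * hσ.1.eigenOverlap hρ k j :=
        Finset.single_le_sum (f := fun k => hσ.1.eigenvalues k * hσ.1.eigenOverlap hρ k j)
          (fun k _ => mul_nonneg (hσ.eigenvalues_nonneg k) (hσ.1.eigenOverlap_nonneg hρ k j))
          (Finset.mem_univ i)
    _ ≤ t * hρ.eigenvalues j := by linarith [hdiag.1]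

theorem exp_neg_half_relEnt_le_re_trace_msqrt_mul_msqrt (hσ : σ.PosSemidef)
    (hσ_tr : σ.trace = 1) (hρ : ρ.PosSemidef) {t : ℝ} (hσρ : σ ≤ t • ρ) :
    Real.exp (-relEnt σ ρ / 2) ≤ (msqrt σ * msqrt ρ).trace.re := by
  set c := hσ.1.eigenOverlap hρ.1
  set p : n × n → ℝ := fun x => hσ.1.eigenvalues x.1 * c x.1 x.2
  set q : n × n → ℝ := fun x => hρ.1.eigenvalues x.2 * c x.1 x.2
  have hp (x : n × n) : 0 ≤ p x :=
    mul_nonneg (hσ.eigenvalues_nonneg _) (hσ.1.eigenOverlap_nonneg hρ.1 _ _)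
  have hpq (x : n × n) (hx : 0 < p x) : 0 < q x := by
    have hle := eigenvalue_mul_eigenOverlap_le hσ hρ.1 hσρ x.1 x.2
    have hc : 0 < c x.1 x.2 := pos_of_mul_pos_right hx (hσ.eigenvalues_nonneg _)
    have hμ : 0 < hρ.1.eigenvalues x.2 := (hρ.eigenvalues_nonneg _).lt_of_ne' fun h0 => by
      rw [h0, mul_zero] at hle
      exact hx.not_ge hle
    exact mul_pos hμ hc
  have hp_sum : ∑ x, p x = 1 := by
    have htr := hσ.1.trace_cfc id
    rw [hσ.1.cfc_id, hσ_tr] at htr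
    rw [Fintype.sum_prod_type]
    simp only [p, ← Finset.mul_sum, c, hσ.1.sum_eigenOverlap_right hρ.1, mul_one]
    exact_mod_cast htr.symm
  have hrelEnt : relEnt σ ρ = ∑ x, p x * (Real.log (p x) - Real.log (q x)) := by
    rw [relEnt_eq_sum hσ.1 hρ.1, Fintype.sum_prod_type]
    refine Finset.sum_congr rfl fun i _ => Finset.sum_congr rfl fun j _ => ?_
    rcases (hp (i, j)).eq_or_lt with h | h
    · simp only [p] at h ⊢
      rw [← h, zero_mul, zero_mul]
    · obtain ⟨hlam, hc⟩ := mul_ne_zero_iff.mp h.ne'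
      obtain ⟨hμ, -⟩ := mul_ne_zero_iff.mp (hpq _ h).ne'
      simp only [p, q]
      rw [Real.log_mul hlam hc, Real.log_mul hμ hc]
      ring
  have hfid : (msqrt σ * msqrt ρ).trace.re = ∑ x, √(p x * q x) := by
    rw [re_trace_msqrt_mul_msqrt_eq_sum hσ hρ, Fintype.sum_prod_type]
    refine Finset.sum_congr rfl fun i _ => Finset.sum_congr rfl fun j _ => ?_
    rw [show p (i, j) * q (i, j) = hσ.1.eigenvalues i * hρ.1.eigenvalues j * c i j ^ 2 by ring,
      Real.sqrt_mul (mul_nonneg (hσ.eigenvalues_nonneg i) (hρ.eigenvalues_nonneg j)),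
      Real.sqrt_mul (hσ.eigenvalues_nonneg i), Real.sqrt_sq (hσ.1.eigenOverlap_nonneg hρ.1 i j)]
  rw [hrelEnt, hfid]
  exact exp_neg_half_sum_mul_log_sub_le_sum_sqrt_mul hp hp_sum hpq

theorem isDensity_midpoint (hA : IsDensity A) (hB : IsDensity B) :
    IsDensity (((1 : ℂ) / 2) • (A + B)) := by
  refine ⟨(hA.1.add hB.1).smul (by positivity), ?_⟩
  rw [trace_smul, trace_add, hA.2, hB.2]
  norm_num

theorem re_trace_msqrt_mul_msqrt_self (hA : IsDensity A) : (msqrt A * msqrt A).trace.re = 1 := by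
  rw [msqrt_mul_self hA.1, hA.2, Complex.one_re]

end QuantumEntropy

open scoped MatrixOrder in
theorem le_two_smul_midpoint {n : Type*} {A B : Matrix n n ℂ} (hA : A.PosSemidef)
    (hB : B.PosSemidef) :
    A ≤ (2 : ℝ) • (((1 : ℂ) / 2) • (A + B)) ∧ B ≤ (2 : ℝ) • (((1 : ℂ) / 2) • (A + B)) := by
  have htwo : (2 : ℝ) • (((1 : ℂ) / 2) • (A + B)) = A + B := by
    ext i j
    simp
  rw [Matrix.le_iff, Matrix.le_iff, htwo, add_sub_cancel_left, add_sub_cancel_right]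
  exact ⟨hB, hA⟩

theorem two_mul_re_trace_mul_mul_le {n : Type*} [Fintype n] {A B R : Matrix n n ℂ}
    (hA : A.IsHermitian) (hB : B.IsHermitian) (hR : R.IsHermitian)
    (hA_sq : (A * A).trace.re = 1) (hB_sq : (B * B).trace.re = 1)
    (hR_sq : (R * R).trace.re = 1) :
    2 * ((A * R).trace.re * (B * R).trace.re) ≤ 1 + (A * B).trace.re := by
  have h := sq_re_trace_conjTranspose_mul_le (A + B) R
  simp only [conjTranspose_add, hA.eq, hB.eq, hR.eq, add_mul, mul_add, trace_add, Complex.add_re,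
    hA_sq, hB_sq, hR_sq, trace_mul_comm B A] at h
  nlinarith [sq_nonneg ((A * R).trace.re - (B * R).trace.re)]

open scoped MatrixOrder in
/-- Fidelity lower bound for channel entropy: with `f = F(σ₀,σ₁)` and
`H = log 2 − H((σ₀+σ₁)/2) + (H(σ₀)+H(σ₁))/2`, one has `e^H − 1 ≤ f`,
in particular `H ≤ log(1+f)`. -/
theorem exp_H_sub_one_le_fidelity {d : ℕ} (σ₀ σ₁ : Matrix (Fin d) (Fin d) ℂ)
    (h₀ : IsDensity σ₀) (h₁ : IsDensity σ₁) (f H : ℝ)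
    (hf : f = Fid σ₀ σ₁)
    (hH : H = Real.log 2 - vN (((1:ℂ)/2) • (σ₀ + σ₁)) + (vN σ₀ + vN σ₁) / 2) :
    Real.exp H - 1 ≤ f ∧ H ≤ Real.log (1 + f) := by
  set ρ := ((1 : ℂ) / 2) • (σ₀ + σ₁)
  have hρ : IsDensity ρ := isDensity_midpoint h₀ h₁
  obtain ⟨hle₀, hle₁⟩ := le_two_smul_midpoint h₀.1 h₁.1
  have hD₀ := exp_neg_half_relEnt_le_re_trace_msqrt_mul_msqrt h₀.1 h₀.2 hρ.1 hle₀
  have hH' : H = Real.log 2 + (-relEnt σ₀ ρ / 2 + -relEnt σ₁ ρ / 2) := by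
    rw [hH, vN_midpoint_eq h₀.1.1 h₁.1.1]
    ring
  have hexp : Real.exp H ≤ 1 + f :=
    calc Real.exp H = 2 * (Real.exp (-relEnt σ₀ ρ / 2) * Real.exp (-relEnt σ₁ ρ / 2)) := by
          rw [hH', Real.exp_add, Real.exp_log two_pos, Real.exp_add]
      _ ≤ 2 * ((msqrt σ₀ * msqrt ρ).trace.re * (msqrt σ₁ * msqrt ρ).trace.re) := by
          gcongr
          · exact (Real.exp_pos _).le.trans hD₀
          · exact exp_neg_half_relEnt_le_re_trace_msqrt_mul_msqrt h₁.1 h₁.2 hρ.1 hle₁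
      _ ≤ 1 + (msqrt σ₀ * msqrt σ₁).trace.re :=
          two_mul_re_trace_mul_mul_le (isHermitian_msqrt h₀.1) (isHermitian_msqrt h₁.1)
            (isHermitian_msqrt hρ.1) (re_trace_msqrt_mul_msqrt_self h₀)
            (re_trace_msqrt_mul_msqrt_self h₁) (re_trace_msqrt_mul_msqrt_self hρ)
      _ ≤ 1 + f := by
          rw [hf, Fid]
          linarith [re_trace_le_traceNorm (msqrt σ₀ * msqrt σ₁)]
  exact ⟨by linarith, (Real.le_log_iff_exp_le ((Real.exp_pos H).trans_le hexp)).mpr hexp⟩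
end

section
/- The function x ↦ (1/2)·arccos(x²) − (1/2)·arccos(x) is monotonically increasing on [0, 1/√3] and monotonically decreasing on [1/√3, 1]. -/
/-!
On `(-1, 1)` the derivative of `x ↦ ½ arccos(x²) − ½ arccos x` is
`1 / (2√(1 − x²)) − x / √(1 − x⁴) = (√(1 + x²) − 2x) / (2√(1 − x⁴))`, using
`√(1 − x⁴) = √(1 − x²) √(1 + x²)`. For `x ≥ 0` its numerator has the sign of `1 + x² − 4x²`,
i.e. of `1/3 − x²`.
-/

open Real Set

lemma hasDerivAt_arccos_sq {x : ℝ} (hx : x ^ 2 < 1) :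
    HasDerivAt (fun x : ℝ => arccos (x ^ 2)) (-(2 * x) / √(1 - x ^ 4)) x := by
  have hsq : HasDerivAt (fun y : ℝ => y ^ 2) (2 * x) x := by simpa using hasDerivAt_pow 2 x
  have h := HasDerivAt.comp (h := fun y : ℝ => y ^ 2) x
    (hasDerivAt_arccos (by nlinarith) hx.ne) hsq
  refine h.congr_deriv ?_
  rw [← pow_mul]
  ring

lemma hasDerivAt_half_arccos_sq_sub_half_arccos {x : ℝ} (hx : x ^ 2 < 1) :
    HasDerivAt (fun x : ℝ => (1/2) * arccos (x ^ 2) - (1/2) * arccos x)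
      ((√(1 + x ^ 2) - 2 * x) / (2 * √(1 - x ^ 4))) x := by
  have hx₁ : -1 < x ∧ x < 1 := abs_lt.1 (by simpa using hx)
  have h := ((hasDerivAt_arccos_sq hx).const_mul (1/2)).sub
    ((hasDerivAt_arccos hx₁.1.ne' hx₁.2.ne).const_mul (1/2))
  refine h.congr_deriv ?_
  have hsplit : √(1 - x ^ 4) = √(1 - x ^ 2) * √(1 + x ^ 2) := by
    rw [← sqrt_mul (by nlinarith)]; ring_nf
  have hpos : 0 < √(1 + x ^ 2) := sqrt_pos.2 (by positivity)
  have hpos' : 0 < √(1 - x ^ 2) := sqrt_pos.2 (by linarith)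
  rw [hsplit]
  field_simp
  ring

lemma sq_le_one_third {x : ℝ} (hx₀ : 0 ≤ x) (hx : x ≤ 1 / √3) : x ^ 2 ≤ 1 / 3 := by
  simpa [div_pow] using pow_le_pow_left₀ hx₀ hx 2

lemma one_third_le_sq {x : ℝ} (hx : 1 / √3 ≤ x) : 1 / 3 ≤ x ^ 2 := by
  simpa [div_pow] using pow_le_pow_left₀ (by positivity) hx 2

lemma two_mul_le_sqrt_one_add_sq {x : ℝ} (hx₀ : 0 ≤ x) (hx : x ≤ 1 / √3) :
    2 * x ≤ √(1 + x ^ 2) := by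
  have := sq_le_one_third hx₀ hx
  exact (le_sqrt (by positivity) (by positivity)).2 (by nlinarith)

lemma sqrt_one_add_sq_le_two_mul {x : ℝ} (hx : 1 / √3 ≤ x) : √(1 + x ^ 2) ≤ 2 * x := by
  have := one_third_le_sq hx
  exact sqrt_le_iff.2 ⟨by linarith [(by positivity : (0 : ℝ) ≤ 1 / √3)], by nlinarith⟩

lemma one_div_sqrt_three_lt_one : 1 / √3 < 1 := by
  rw [div_lt_one (by positivity), lt_sqrt zero_le_one]
  norm_num

/-- The function `x ↦ ½ arccos(x²) − ½ arccos(x)` is monotonically increasing on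
`[0, 1/√3]` and monotonically decreasing on `[1/√3, 1]`. -/
theorem arccos_diff_monotone :
    MonotoneOn (fun x : ℝ => (1/2) * Real.arccos (x^2) - (1/2) * Real.arccos x)
      (Set.Icc (0:ℝ) (1 / Real.sqrt 3)) ∧
    AntitoneOn (fun x : ℝ => (1/2) * Real.arccos (x^2) - (1/2) * Real.arccos x)
      (Set.Icc (1 / Real.sqrt 3) (1:ℝ)) := by
  have hcont : Continuous (fun x : ℝ => (1/2) * arccos (x ^ 2) - (1/2) * arccos x) := by
    fun_prop
  have hderiv {x : ℝ} (s : Set ℝ) (hx₀ : 0 < x) (hx₁ : x < 1) :=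
    (hasDerivAt_half_arccos_sq_sub_half_arccos (x := x) (by nlinarith)).hasDerivWithinAt (s := s)
  set f' : ℝ → ℝ := fun x => (√(1 + x ^ 2) - 2 * x) / (2 * √(1 - x ^ 4))
  constructor
  · refine monotoneOn_of_hasDerivWithinAt_nonneg (f' := f') (convex_Icc _ _) hcont.continuousOn
      (fun x hx => ?_) (fun x hx => ?_) <;> rw [interior_Icc] at hx
    · exact hderiv _ hx.1 (hx.2.trans one_div_sqrt_three_lt_one)
    · exact div_nonneg (sub_nonneg.2 (two_mul_le_sqrt_one_add_sq hx.1.le hx.2.le))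
        (by positivity)
  · refine antitoneOn_of_hasDerivWithinAt_nonpos (f' := f') (convex_Icc _ _) hcont.continuousOn
      (fun x hx => ?_) (fun x hx => ?_) <;> rw [interior_Icc] at hx
    · exact hderiv _ ((by positivity : (0 : ℝ) < 1 / √3).trans hx.1) hx.2
    · exact div_nonpos_of_nonpos_of_nonneg (sub_nonpos.2 (sqrt_one_add_sq_le_two_mul hx.1.le))
        (by positivity)
end

section
/- The function x ↦ (arccos(x²) − arccos(x)) / √(1−x) is monotonically increasing on [0,1). -/
/-!
Substituting `t = x - x(1-x)v` in `arccos (x²) - arccos x = ∫_{x²}^x dt / √(1 - t²)` gives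
`(arccos (x²) - arccos x) / √(1 - x) = ∫₀¹ x / √(substFactor x v) dv`. For fixed `v ∈ [0,1]`,
`substFactor x v / x²` is the product `(1/x + v)(1/x + 1 - v + x v)` of two positive factors
that decrease in `x ∈ (0,1)`, so the integrand increases in `x`.
-/

open Real Set

/-- With `t = x - x(1-x)v`, the factors are `1 - t = (1-x)(1+xv)` and
`1 + t = 1 + x(1-v) + x²v`. -/
noncomputable def substFactor (x v : ℝ) : ℝ := (1 + x * v) * (1 + x * (1 - v) + x ^ 2 * v)

lemma one_sub_sq_eq_mul_substFactor (x v : ℝ) :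
    1 - (x - x * (1 - x) * v) ^ 2 = (1 - x) * substFactor x v := by
  unfold substFactor; ring

lemma continuous_substFactor (x : ℝ) : Continuous (substFactor x) := by
  unfold substFactor; fun_prop

lemma one_le_substFactor {x v : ℝ} (hx : 0 ≤ x) (hv : v ∈ Icc (0 : ℝ) 1) :
    1 ≤ substFactor x v := by
  have := mul_nonneg hx hv.1
  have := mul_nonneg hx (sub_nonneg.2 hv.2)
  have := mul_nonneg (sq_nonneg x) hv.1
  unfold substFactor; nlinarith

lemma sqrt_substFactor_pos {x v : ℝ} (hx : 0 ≤ x) (hv : v ∈ Icc (0 : ℝ) 1) :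
    0 < √(substFactor x v) :=
  sqrt_pos.2 ((one_le_substFactor hx hv).trans_lt' one_pos)

lemma sq_mul_substFactor_le {x y v : ℝ} (hx : 0 ≤ x) (hxy : x ≤ y) (hy : y ≤ 1)
    (hv : v ∈ Icc (0 : ℝ) 1) : x ^ 2 * substFactor y v ≤ y ^ 2 * substFactor x v := by
  obtain ⟨hv0, hv1⟩ := hv
  have hy0 : 0 ≤ y := hx.trans hxy
  have hxyv : x * y * v ≤ 1 := by
    have : x * y ≤ 1 := by nlinarith
    nlinarith [mul_nonneg (mul_nonneg hx hy0) (sub_nonneg.2 hv1)]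
  have h₁ : x * (1 + y * v) ≤ y * (1 + x * v) := by nlinarith
  have h₂ : x * (1 + y * (1 - v) + y ^ 2 * v) ≤ y * (1 + x * (1 - v) + x ^ 2 * v) := by
    nlinarith [mul_nonneg (sub_nonneg.2 hxy) (sub_nonneg.2 hxyv)]
  have h₂' : 0 ≤ x * (1 + y * (1 - v) + y ^ 2 * v) := by
    have := sub_nonneg.2 hv1
    positivity
  calc x ^ 2 * substFactor y v
      = (x * (1 + y * v)) * (x * (1 + y * (1 - v) + y ^ 2 * v)) := by unfold substFactor; ring
    _ ≤ (y * (1 + x * v)) * (y * (1 + x * (1 - v) + x ^ 2 * v)) :=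
      mul_le_mul h₁ h₂ h₂' (by positivity)
    _ = y ^ 2 * substFactor x v := by unfold substFactor; ring

lemma div_sqrt_substFactor_le {x y v : ℝ} (hx : 0 ≤ x) (hxy : x ≤ y) (hy : y ≤ 1)
    (hv : v ∈ Icc (0 : ℝ) 1) : x / √(substFactor x v) ≤ y / √(substFactor y v) := by
  rw [div_le_div_iff₀ (sqrt_substFactor_pos hx hv) (sqrt_substFactor_pos (hx.trans hxy) hv)]
  calc x * √(substFactor y v) = √(x ^ 2 * substFactor y v) := by
        rw [sqrt_mul (sq_nonneg x), sqrt_sq hx]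
    _ ≤ √(y ^ 2 * substFactor x v) := sqrt_le_sqrt (sq_mul_substFactor_le hx hxy hy hv)
    _ = y * √(substFactor x v) := by rw [sqrt_mul (sq_nonneg y), sqrt_sq (hx.trans hxy)]

lemma intervalIntegrable_div_sqrt_substFactor {x : ℝ} (hx : 0 ≤ x) :
    IntervalIntegrable (fun v => x / √(substFactor x v)) MeasureTheory.volume 0 1 :=
  ContinuousOn.intervalIntegrable_of_Icc zero_le_one fun _ hv =>
    (continuousAt_const.div (continuous_sqrt.comp (continuous_substFactor x)).continuousAt
      (sqrt_substFactor_pos hx hv).ne').continuousWithinAt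

lemma hasDerivAt_neg_arcsin_div_sqrt {x v : ℝ} (hx : 0 ≤ x) (hx1 : x < 1)
    (hv : v ∈ Icc (0 : ℝ) 1) :
    HasDerivAt (fun v => -arcsin (x - x * (1 - x) * v) / √(1 - x))
      (x / √(substFactor x v)) v := by
  have h1x : 0 < 1 - x := sub_pos.2 hx1
  have ht : 0 < 1 - (x - x * (1 - x) * v) ^ 2 := by
    rw [one_sub_sq_eq_mul_substFactor]
    exact mul_pos h1x ((one_le_substFactor hx hv).trans_lt' one_pos)
  have hlin : HasDerivAt (fun v => x - x * (1 - x) * v) (-(x * (1 - x))) v := by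
    simpa using ((hasDerivAt_id v).const_mul (x * (1 - x))).const_sub x
  refine (((hasDerivAt_arcsin (by nlinarith) (by nlinarith)).comp v hlin).neg.div_const
    √(1 - x)).congr_deriv ?_
  rw [one_sub_sq_eq_mul_substFactor, sqrt_mul h1x.le]
  field_simp
  rw [sq_sqrt h1x.le]

lemma arccos_sq_sub_arccos_div_sqrt_eq_integral {x : ℝ} (hx : 0 ≤ x) (hx1 : x < 1) :
    (arccos (x ^ 2) - arccos x) / √(1 - x) = ∫ v in (0 : ℝ)..1, x / √(substFactor x v) := by
  rw [intervalIntegral.integral_eq_sub_of_hasDerivAt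
    (fun v hv => hasDerivAt_neg_arcsin_div_sqrt hx hx1 (uIcc_of_le (zero_le_one (α := ℝ)) ▸ hv))
    (intervalIntegrable_div_sqrt_substFactor hx),
    arccos_eq_pi_div_two_sub_arcsin, arccos_eq_pi_div_two_sub_arcsin]
  ring_nf

/-- The function `x ↦ (arccos(x²) − arccos(x)) / √(1−x)` is monotonically increasing
on `[0,1)`. -/
theorem arccos_diff_div_sqrt_monotone :
    MonotoneOn (fun x : ℝ => (Real.arccos (x^2) - Real.arccos x) / Real.sqrt (1 - x))
      (Set.Ico (0:ℝ) 1) := by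
  intro x hx y hy hxy
  simp only [arccos_sq_sub_arccos_div_sqrt_eq_integral hx.1 hx.2,
    arccos_sq_sub_arccos_div_sqrt_eq_integral hy.1 hy.2]
  exact intervalIntegral.integral_mono_on zero_le_one
    (intervalIntegrable_div_sqrt_substFactor hx.1) (intervalIntegrable_div_sqrt_substFactor hy.1)
    fun v hv => div_sqrt_substFactor_le hx.1 hxy hy.2.le hv
end

section
/- For all H ∈ (0, log 2], h₂⁻¹(H) ≥ (1 − e⁻¹) · H / (1 − log H), where h₂⁻¹ : [0, log 2] → [0, 1/2] is the inverse of the binary entropy function (natural logarithm). -/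
/-
Write `f x = x (1 - log x)`. Since `-(1 - p) log (1 - p) ≤ p`, the binary entropy satisfies
`h₂ p ≤ f p`, and `f` is increasing on `[0, 1]`. So it suffices to check `f q ≤ H` for
`q = c H / t` with `c = 1 - e⁻¹` and `t = 1 - log H`. Here `1 - log q = t + log (t / c)`, and
`log (t / c) ≤ t / (c e)` turns `f q ≤ H` into the identity `c + e⁻¹ = 1`.
-/

open Real Set

theorem h2_le_mul_one_sub_log {p : ℝ} (hp : p ≤ 1) : h2 p ≤ p * (1 - log p) := by
  have := self_sub_one_le_mul_log (x := 1 - p) (by linarith)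
  unfold h2
  linarith

theorem strictMonoOn_mul_one_sub_log : StrictMonoOn (fun x => x * (1 - log x)) (Icc 0 1) := by
  have hf : (fun x => x * (1 - log x)) = fun x => x - x * log x := by
    funext x; ring
  rw [hf]
  refine strictMonoOn_of_deriv_pos (convex_Icc 0 1)
    (continuous_id.sub continuous_mul_log).continuousOn fun x hx => ?_
  rw [interior_Icc] at hx
  have hderiv : HasDerivAt (fun x => x - x * log x) (1 - (log x + 1)) x :=
    (hasDerivAt_id' x).sub (hasDerivAt_mul_log hx.1.ne')
  rw [hderiv.deriv]
  linarith [log_neg hx.1 hx.2]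

theorem log_le_mul_exp_neg_one {y : ℝ} (hy : 0 < y) : log y ≤ y * exp (-1) := by
  have := log_le_sub_one_of_pos (mul_pos hy (exp_pos (-1)))
  rw [log_mul hy.ne' (exp_pos _).ne', log_exp] at this
  linarith

theorem mul_one_sub_log_le {H : ℝ} (hH : 0 < H) (hlogH : log H < 1) :
    let q := (1 - exp (-1)) * H / (1 - log H)
    q * (1 - log q) ≤ H := by
  intro q
  set c := 1 - exp (-1)
  set t := 1 - log H
  have hc : 0 < c := by simp only [c]; linarith [exp_neg_one_lt_half]
  have ht : 0 < t := by simp only [t]; linarith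
  have hlog_q : 1 - log q = t + log (t / c) := by
    simp only [q]
    rw [log_div (by positivity) ht.ne', log_mul hc.ne' hH.ne', log_div ht.ne' hc.ne']
    ring
  have hlog_tc : c * log (t / c) ≤ exp (-1) * t := by
    have := mul_le_mul_of_nonneg_left (log_le_mul_exp_neg_one (div_pos ht hc)) hc.le
    exact this.trans_eq (by field_simp)
  calc q * (1 - log q) = H / t * (c * t + c * log (t / c)) := by
        rw [hlog_q]; simp only [q]; ring
    _ ≤ H / t * (c * t + exp (-1) * t) := by gcongr
    _ = H := by simp only [c]; field_simp; ring

/-- For all `H ∈ (0, log 2]`, `h₂⁻¹(H) ≥ (1 − e⁻¹) · H / (1 − log H)`. -/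
theorem h2inv_lower_bound (h2inv : ℝ → ℝ)
    (hinv : ∀ x ∈ Set.Icc (0:ℝ) (Real.log 2),
      h2inv x ∈ Set.Icc (0:ℝ) (1/2) ∧ h2 (h2inv x) = x)
    (H : ℝ) (hH : H ∈ Set.Ioc (0:ℝ) (Real.log 2)) :
    h2inv H ≥ (1 - Real.exp (-1)) * H / (1 - Real.log H) := by
  obtain ⟨hH0, hH2⟩ := hH
  obtain ⟨⟨hp0, hp2⟩, hp⟩ := hinv H ⟨hH0.le, hH2⟩
  have hH1 : H < 1 := hH2.trans_lt (by linarith [log_two_lt_d9])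
  have hlogH : log H < 0 := log_neg hH0 hH1
  have hq : (1 - exp (-1)) * H / (1 - log H) ∈ Icc (0 : ℝ) 1 := by
    have := exp_pos (-1)
    have := exp_neg_one_lt_half
    constructor
    · exact div_nonneg (mul_nonneg (by linarith) hH0.le) (by linarith)
    · rw [div_le_one (by linarith)]
      nlinarith
  refine (strictMonoOn_mul_one_sub_log.le_iff_le hq ⟨hp0, by linarith⟩).1 ?_
  calc _ ≤ H := mul_one_sub_log_le hH0 (by linarith)
    _ = h2 (h2inv H) := hp.symm
    _ ≤ _ := h2_le_mul_one_sub_log (by linarith)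
end
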